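/- Let k ≥ 2 and let A ⊆ [k]^m be a set containing no combinatorial line, and let B = A ∩ [k−1]^m. For each j ≤ k−1 let C_j = {x ∈ [k]^m : x^{k→j} ∈ B}, where x^{k→j} is the string obtained from x by changing every coordinate equal to k into j. Then each C_j is a jk-insensitive set, and A ∩ C_1 ∩ … ∩ C_{k−1} ⊆ [k−1]^m. -/

import Mathlib

open Finset

/-- The point of a combinatorial line (with wildcard set `W` and fixed values `x`)
obtained by setting all wildcard coordinates equal to `j`. -/
def linePt {m k : ℕ} (W : Finset (Fin m)) (x : Fin m → Fin k) (j : Fin k) :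
    Fin m → Fin k :=
  fun i => if i ∈ W then j else x i

/-- `A ⊆ [k]^m` contains a combinatorial line. -/
def HasLine {m k : ℕ} (A : Finset (Fin m → Fin k)) : Prop :=
  ∃ (W : Finset (Fin m)) (x : Fin m → Fin k),
    W.Nonempty ∧ ∀ j : Fin k, linePt W x j ∈ A

/-- `chgTo top j x` is the string `x^{k→j}` obtained from `x` by changing every
coordinate equal to `top` (the value `k`) into `j`. -/
def chgTo {m k : ℕ} (top j : Fin k) (x : Fin m → Fin k) : Fin m → Fin k :=
  fun i => if x i = top then j else x i

/-- `S` is `jk`-insensitive: membership in `S` depends only on `x^{k→j}`. -/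
def Insensitive {m k : ℕ} (top j : Fin k) (S : Finset (Fin m → Fin k)) : Prop :=
  ∀ x y : Fin m → Fin k, chgTo top j x = chgTo top j y → (x ∈ S ↔ y ∈ S)

/-!
A string `x` whose coordinates equal to `k` form the nonempty set `W` lies on the combinatorial
line with wildcard set `W` through `x`, whose `j`-th point is `x^{k→j}`. For `x ∈ A` lying in
every `C_j`, all these points are in `A` (the `k`-th one is `x` itself), so a line-free `A`
forces `W = ∅`.
-/

section

variable {m k : ℕ}

theorem insensitive_filter_chgTo_mem (top j : Fin k) (B : Finset (Fin m → Fin k)) :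
    Insensitive top j (univ.filter fun x => chgTo top j x ∈ B) := by
  intro x y hxy
  simp only [mem_filter, mem_univ, true_and, hxy]

@[simp]
theorem chgTo_self (top : Fin k) (x : Fin m → Fin k) : chgTo top top x = x := by
  funext i
  by_cases hi : x i = top <;> simp [chgTo, hi]

theorem linePt_filter_eq (top j : Fin k) (x : Fin m → Fin k) :
    linePt (univ.filter fun i => x i = top) x j = chgTo top j x := by
  funext i
  simp [linePt, chgTo]

theorem hasLine_of_forall_chgTo_mem {A : Finset (Fin m → Fin k)} {top : Fin k}
    {x : Fin m → Fin k} {i : Fin m} (hi : x i = top) (hA : ∀ j, chgTo top j x ∈ A) :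
    HasLine A :=
  ⟨univ.filter fun i => x i = top, x, ⟨i, by simp [hi]⟩,
    fun j => linePt_filter_eq top j x ▸ hA j⟩

end

theorem insensitive_sets_disjoint_from_line_free_general (k m : ℕ)
    (A : Finset (Fin m → Fin k)) (hA : ¬ HasLine A)
    (top : Fin k)
    (B : Finset (Fin m → Fin k)) (hB : B = A.filter fun x => ∀ i, x i ≠ top)
    (C : Fin k → Finset (Fin m → Fin k))
    (hC : ∀ j, C j = Finset.univ.filter fun x => chgTo top j x ∈ B) :
    (∀ j, j ≠ top → Insensitive top j (C j)) ∧
    ∀ x ∈ A, (∀ j, j ≠ top → x ∈ C j) → ∀ i, x i ≠ top := by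
  refine ⟨fun j _ => hC j ▸ insensitive_filter_chgTo_mem top j B, ?_⟩
  intro x hxA hxC i hi
  refine hA (hasLine_of_forall_chgTo_mem hi fun j => ?_)
  by_cases hj : j = top
  · simpa [hj] using hxA
  · have hxCj := hxC j hj
    rw [hC, hB, mem_filter, mem_filter] at hxCj
    exact hxCj.2.1

/-- Let `A ⊆ [k]^m` contain no combinatorial line and let `B = A ∩ [k−1]^m`
(the members of `A` with no coordinate equal to the top value `k`).  For each
`j ≤ k−1` let `C_j = {x : x^{k→j} ∈ B}`.  Then each `C_j` is `jk`-insensitive and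
`A ∩ C_1 ∩ … ∩ C_{k−1} ⊆ [k−1]^m`. -/
theorem insensitive_sets_disjoint_from_line_free (k m : ℕ) (hk : 2 ≤ k)
    (A : Finset (Fin m → Fin k)) (hA : ¬ HasLine A)
    (top : Fin k) (htop : (top : ℕ) = k - 1)
    (B : Finset (Fin m → Fin k)) (hB : B = A.filter fun x => ∀ i, x i ≠ top)
    (C : Fin k → Finset (Fin m → Fin k))
    (hC : ∀ j, C j = Finset.univ.filter fun x => chgTo top j x ∈ B) :
    (∀ j, j ≠ top → Insensitive top j (C j)) ∧
    ∀ x ∈ A, (∀ j, j ≠ top → x ∈ C j) → ∀ i, x i ≠ top :=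
  insensitive_sets_disjoint_from_line_free_general k m A hA top B hB C hC
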